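/- arXiv:2404.08473 — 2 statements merged into one kernel-verified Lean document; each statement's English description precedes it below -/
import Mathlib

section
/- Let H be a complex Hilbert space and let T ∈ B(H) be a contraction, i.e., ‖T‖ ≤ 1. Then ker(I − T) = ker(I − T*) (so ker(I − T) reduces T), and the power sequence {T^n} is weakly convergent if and only if ⟨T^n x, y⟩ → 0 as n → ∞ for every x ∈ ker(I − T)^⊥ and every y ∈ H; if this is the case, then the weak limit of {T^n} is the orthogonal projection of H onto ker(I − T). -/
/-!
For a contraction `T`, a fixed point `x` of `T` is also fixed by `T†`, since `‖T† x‖ ≤ ‖x‖` and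
`re ⟪T† x, x⟫ = ‖x‖ ^ 2`. Hence `ker (1 - T) = ker (1 - T†)`, whose orthogonal complement is the
closure of `range (1 - T)`. A weak limit `A` of `T ^ n` satisfies `A T = A`, so it vanishes on
`range (1 - T)` and by continuity on `ker (1 - T)ᗮ`. Conversely, `T ^ n` is the identity on
`ker (1 - T)`, so weak convergence to `0` on `ker (1 - T)ᗮ` makes the orthogonal projection onto
`ker (1 - T)` the weak limit; by uniqueness it is the only one.
-/

open Filter Topology

namespace ContinuousLinearMap

variable {𝕜 E : Type*} [RCLike 𝕜] [NormedAddCommGroup E] [InnerProductSpace 𝕜 E]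

lemma mem_ker_one_sub_iff {T : E →L[𝕜] E} {x : E} :
    x ∈ LinearMap.ker ((1 - T : E →L[𝕜] E) : E →ₗ[𝕜] E) ↔ T x = x := by
  rw [LinearMap.mem_ker, coe_coe, sub_apply, one_apply_eq_self, sub_eq_zero, eq_comm]

lemma pow_apply_eq_self {T : E →L[𝕜] E} {x : E} (hx : T x = x) (n : ℕ) : (T ^ n) x = x := by
  rw [FunLike.coe_pow_eq_iterate]
  exact Function.IsFixedPt.iterate hx n

variable (𝕜) in
def PowersTendstoWeakly (T A : E →L[𝕜] E) : Prop :=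
  ∀ x y : E, Tendsto (fun n : ℕ => inner 𝕜 ((T ^ n) x) y) atTop (𝓝 (inner 𝕜 (A x) y))

lemma powersTendstoWeakly_starProjection {T : E →L[𝕜] E} (K : Submodule 𝕜 E)
    [K.HasOrthogonalProjection] (hK : ∀ x ∈ K, T x = x)
    (hKperp : ∀ x ∈ Kᗮ, ∀ y : E, Tendsto (fun n : ℕ => inner 𝕜 ((T ^ n) x) y) atTop (𝓝 0)) :
    PowersTendstoWeakly 𝕜 T K.starProjection := by
  intro x y
  have hsplit : ∀ n : ℕ, inner 𝕜 ((T ^ n) x) y =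
      inner 𝕜 (K.starProjection x) y + inner 𝕜 ((T ^ n) (x - K.starProjection x)) y := by
    intro n
    rw [map_sub, pow_apply_eq_self (hK _ (K.starProjection_apply_mem x)), inner_sub_left]
    ring
  have hlim := (hKperp _ (K.sub_starProjection_mem_orthogonal x) y).const_add
    (inner 𝕜 (K.starProjection x) y)
  rw [add_zero] at hlim
  exact hlim.congr fun n => (hsplit n).symm

namespace PowersTendstoWeakly

variable {T A : E →L[𝕜] E}

lemma unique {B : E →L[𝕜] E} (hA : PowersTendstoWeakly 𝕜 T A) (hB : PowersTendstoWeakly 𝕜 T B) :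
    A = B :=
  ext fun x => ext_inner_right 𝕜 fun y => tendsto_nhds_unique (hA x y) (hB x y)

lemma apply_apply (hA : PowersTendstoWeakly 𝕜 T A) (x : E) : A (T x) = A x := by
  refine ext_inner_right 𝕜 fun y => tendsto_nhds_unique (hA (T x) y) ?_
  simpa only [Function.comp_def, pow_succ, mul_apply_eq_comp] using
    (hA x y).comp (tendsto_add_atTop_nat 1)

lemma range_one_sub_le_ker (hA : PowersTendstoWeakly 𝕜 T A) :
    LinearMap.range ((1 - T : E →L[𝕜] E) : E →ₗ[𝕜] E) ≤ LinearMap.ker (A : E →ₗ[𝕜] E) := by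
  rintro _ ⟨x, rfl⟩
  simp [hA.apply_apply]

end PowersTendstoWeakly

variable [CompleteSpace E]

lemma adjoint_apply_eq_self_of_apply_eq_self {T : E →L[𝕜] E} (hT : ‖T‖ ≤ 1) {x : E}
    (hx : T x = x) : adjoint T x = x := by
  refine eq_of_norm_le_re_inner_eq_norm_sq (𝕜 := 𝕜) ?_ ?_
  · simpa using (adjoint T).le_of_opNorm_le (c := 1) (by rwa [adjoint.norm_map]) x
  · rw [adjoint_inner_left, hx, inner_self_eq_norm_sq]

lemma ker_one_sub_adjoint_of_norm_le_one {T : E →L[𝕜] E} (hT : ‖T‖ ≤ 1) :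
    LinearMap.ker ((1 - adjoint T : E →L[𝕜] E) : E →ₗ[𝕜] E) =
      LinearMap.ker ((1 - T : E →L[𝕜] E) : E →ₗ[𝕜] E) := by
  ext x
  simp only [mem_ker_one_sub_iff]
  refine ⟨fun hx => ?_, adjoint_apply_eq_self_of_apply_eq_self hT⟩
  simpa using adjoint_apply_eq_self_of_apply_eq_self (T := adjoint T) (by rwa [adjoint.norm_map]) hx

lemma orthogonal_ker_one_sub_of_norm_le_one {T : E →L[𝕜] E} (hT : ‖T‖ ≤ 1) :
    (LinearMap.ker ((1 - T : E →L[𝕜] E) : E →ₗ[𝕜] E))ᗮ =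
      (LinearMap.range ((1 - T : E →L[𝕜] E) : E →ₗ[𝕜] E)).topologicalClosure := by
  rw [← ker_one_sub_adjoint_of_norm_le_one hT, ← Submodule.orthogonal_orthogonal_eq_closure,
    orthogonal_range, map_sub, adjoint_one]

lemma PowersTendstoWeakly.apply_eq_zero_of_mem_orthogonal {T A : E →L[𝕜] E} (hT : ‖T‖ ≤ 1)
    (hA : PowersTendstoWeakly 𝕜 T A) {x : E}
    (hx : x ∈ (LinearMap.ker ((1 - T : E →L[𝕜] E) : E →ₗ[𝕜] E))ᗮ) : A x = 0 := by
  rw [orthogonal_ker_one_sub_of_norm_le_one hT] at hx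
  exact Submodule.topologicalClosure_minimal _ hA.range_one_sub_le_ker (isClosed_ker A) hx

end ContinuousLinearMap

open ContinuousLinearMap

/-- Let `T` be a contraction, `‖T‖ ≤ 1`. Then `ker (I - T) = ker (I - T*)` (so
`ker (I - T)` reduces `T`), and `{T^n}` is weakly convergent iff `⟨T^n x, y⟩ → 0` for
all `x ∈ ker (I - T)ᗮ` and `y ∈ H`; in that case the weak limit is the orthogonal
projection of `H` onto `ker (I - T)`. -/
theorem stmt12 {H : Type*} [NormedAddCommGroup H] [InnerProductSpace ℂ H] [CompleteSpace H]
    (T : H →L[ℂ] H) (hT : ‖T‖ ≤ 1) :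
    LinearMap.ker ((1 - T : H →L[ℂ] H) : H →ₗ[ℂ] H) = LinearMap.ker ((1 - ContinuousLinearMap.adjoint T : H →L[ℂ] H) : H →ₗ[ℂ] H) ∧
    ((∀ x ∈ LinearMap.ker ((1 - T : H →L[ℂ] H) : H →ₗ[ℂ] H), T x ∈ LinearMap.ker ((1 - T : H →L[ℂ] H) : H →ₗ[ℂ] H)) ∧
      (∀ x ∈ LinearMap.ker ((1 - T : H →L[ℂ] H) : H →ₗ[ℂ] H),
        ContinuousLinearMap.adjoint T x ∈ LinearMap.ker ((1 - T : H →L[ℂ] H) : H →ₗ[ℂ] H))) ∧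
    ((∃ A : H →L[ℂ] H, ∀ x y : H,
        Tendsto (fun n : ℕ => (inner ℂ ((T ^ n) x) y : ℂ)) atTop (𝓝 (inner ℂ (A x) y)))
      ↔ (∀ x ∈ (LinearMap.ker ((1 - T : H →L[ℂ] H) : H →ₗ[ℂ] H))ᗮ, ∀ y : H,
          Tendsto (fun n : ℕ => (inner ℂ ((T ^ n) x) y : ℂ)) atTop (𝓝 (0 : ℂ)))) ∧
    (∀ P : H →L[ℂ] H,
      (∀ x y : H,
        Tendsto (fun n : ℕ => (inner ℂ ((T ^ n) x) y : ℂ)) atTop (𝓝 (inner ℂ (P x) y))) →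
      (P ∘L P = P ∧ ContinuousLinearMap.adjoint P = P ∧
        LinearMap.range (P : H →ₗ[ℂ] H) = LinearMap.ker ((1 - T : H →L[ℂ] H) : H →ₗ[ℂ] H))) := by
  set K := LinearMap.ker ((1 - T : H →L[ℂ] H) : H →ₗ[ℂ] H)
  have : CompleteSpace K := (isClosed_ker (1 - T)).completeSpace_coe
  have hKfix : ∀ x ∈ K, T x = x := fun x => mem_ker_one_sub_iff.mp
  have hweak_iff : (∃ A, PowersTendstoWeakly ℂ T A) ↔
      ∀ x ∈ Kᗮ, ∀ y : H, Tendsto (fun n : ℕ => inner ℂ ((T ^ n) x) y) atTop (𝓝 0) :=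
    ⟨fun ⟨A, hA⟩ x hx y => by simpa [hA.apply_eq_zero_of_mem_orthogonal hT hx] using hA x y,
      fun h => ⟨_, powersTendstoWeakly_starProjection K hKfix h⟩⟩
  refine ⟨(ker_one_sub_adjoint_of_norm_le_one hT).symm,
    ⟨fun x hx => by rwa [hKfix x hx], fun x hx => ?_⟩, hweak_iff, fun P hP => ?_⟩
  · rwa [adjoint_apply_eq_self_of_apply_eq_self hT (hKfix x hx)]
  obtain rfl : P = K.starProjection :=
    PowersTendstoWeakly.unique hP (powersTendstoWeakly_starProjection K hKfix (hweak_iff.mp ⟨P, hP⟩))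
  exact ⟨K.isIdempotentElem_starProjection, (isSelfAdjoint_starProjection K).adjoint_eq,
    K.range_starProjection⟩
end

section
/- Let H be a complex Hilbert space and suppose T, P ∈ B(H) are such that the power sequence {T^n} converges weakly to P and liminf_{n→∞} ‖T^n x‖ ≤ ‖x‖ for every x ∈ H. Then P is the orthogonal projection of H onto ker(I − T), the subspace ker(I − T) reduces T, and ker(I − T) = ker(I − T*). -/
/-!
Passing `T ^ (n + 1) = T * T ^ n` to the weak limit gives `T P = P`, and `P` fixes every fixed
point of `T`; hence `P` is an idempotent whose range is the fixed space of `T`. Weakly convergent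
sequences are bounded (Banach–Steinhaus), so the norm is weakly lower semicontinuous along the
orbits, and the liminf hypothesis makes `P` a contraction. An idempotent contraction on a Hilbert
space is an orthogonal projection: `0` is a closest point of `ker P` to every point of `range P`.
Finally the powers of `T*` converge weakly to `P* = P`, so `T*` has the same fixed space as `T`.
-/

open Filter Topology
open scoped InnerProductSpace

theorem ContinuousLinearMap.mem_ker_one_sub_iff_s16 {R M : Type*} [Ring R] [TopologicalSpace M]
    [AddCommGroup M] [Module R M] [IsTopologicalAddGroup M] (T : M →L[R] M) {x : M} :
    x ∈ LinearMap.ker ((1 - T : M →L[R] M) : M →ₗ[R] M) ↔ T x = x := by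
  rw [LinearMap.mem_ker, ContinuousLinearMap.coe_coe, sub_apply,
    one_apply_eq_self, sub_eq_zero, eq_comm]

section InnerProductSpace

variable {𝕜 E : Type*} [RCLike 𝕜] [NormedAddCommGroup E] [InnerProductSpace 𝕜 E]

theorem isBoundedUnder_norm_of_forall_tendsto_inner [CompleteSpace E] {u : ℕ → E}
    {g : E → 𝕜} (h : ∀ y, Tendsto (fun n => ⟪u n, y⟫_𝕜) atTop (𝓝 (g y))) :
    IsBoundedUnder (· ≤ ·) atTop (fun n => ‖u n‖) := by
  have hpt : ∀ y, ∃ C, ∀ n, ‖innerSL 𝕜 (u n) y‖ ≤ C := fun y => by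
    obtain ⟨C, hC⟩ := (h y).norm.bddAbove_range
    exact ⟨C, fun n => hC (Set.mem_range_self n)⟩
  obtain ⟨C, hC⟩ := banach_steinhaus hpt
  exact isBoundedUnder_of ⟨C, fun n => by simpa only [innerSL_apply_norm] using hC n⟩

theorem norm_le_liminf_norm_of_tendsto_inner {ι : Type*} {l : Filter ι} [l.NeBot] {u : ι → E}
    {w : E} (hu : IsBoundedUnder (· ≤ ·) l (fun n => ‖u n‖))
    (h : Tendsto (fun n => ⟪u n, w⟫_𝕜) l (𝓝 ⟪w, w⟫_𝕜)) :
    ‖w‖ ≤ liminf (fun n => ‖u n‖) l := by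
  have hlim : Tendsto (fun n => ‖⟪u n, w⟫_𝕜‖ / ‖w‖) l (𝓝 ‖w‖) := by
    convert h.norm.div_const ‖w‖ using 2
    rw [inner_self_eq_norm_sq_to_K, norm_pow, RCLike.norm_ofReal, abs_norm, sq, mul_self_div_self]
  rw [← hlim.liminf_eq]
  refine liminf_le_liminf (Eventually.of_forall fun n => ?_) hlim.isBoundedUnder_ge
    hu.isCoboundedUnder_ge
  exact div_le_of_le_mul₀ (norm_nonneg _) (norm_nonneg _) (norm_inner_le_norm _ _)

theorem LinearMap.IsIdempotentElem.isOrtho_range_ker_of_norm_apply_le {p : E →ₗ[𝕜] E}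
    (hp : IsIdempotentElem p) (hnorm : ∀ x, ‖p x‖ ≤ ‖x‖) :
    LinearMap.range p ⟂ LinearMap.ker p := by
  rw [Submodule.isOrtho_iff_inner_eq]
  rintro u hu v hv
  have hpu : p u = u := (LinearMap.IsIdempotentElem.mem_range_iff hp).mp hu
  -- `0` is a closest point of `ker p` to `u`, since `p` maps `u - w` to `u` for `w ∈ ker p`.
  have hmin : ‖u - 0‖ = ⨅ w : LinearMap.ker p, ‖u - w‖ := by
    refine le_antisymm (le_ciInf fun w => ?_) (ciInf_le ⟨0, ?_⟩ 0)
    · simpa [hpu, LinearMap.mem_ker.mp w.2] using hnorm (u - w)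
    · rintro _ ⟨w, rfl⟩
      exact norm_nonneg _
  simpa using
    ((LinearMap.ker p).norm_eq_iInf_iff_inner_eq_zero (Submodule.zero_mem _)).mp hmin v hv

theorem ContinuousLinearMap.isSelfAdjoint_of_isIdempotentElem_of_norm_apply_le [CompleteSpace E]
    {p : E →L[𝕜] E} (hp : IsIdempotentElem p) (hnorm : ∀ x, ‖p x‖ ≤ ‖x‖) :
    IsSelfAdjoint p := by
  have hp' := ContinuousLinearMap.IsIdempotentElem.toLinearMap hp
  rw [ContinuousLinearMap.isSelfAdjoint_iff_isSymmetric,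
    LinearMap.IsIdempotentElem.isSymmetric_iff_isOrtho_range_ker hp']
  exact LinearMap.IsIdempotentElem.isOrtho_range_ker_of_norm_apply_le hp' hnorm

def IsWeakPowerLimit (T P : E →L[𝕜] E) : Prop :=
  ∀ x y, Tendsto (fun n : ℕ => ⟪(T ^ n) x, y⟫_𝕜) atTop (𝓝 ⟪P x, y⟫_𝕜)

namespace IsWeakPowerLimit

variable {T P : E →L[𝕜] E}

theorem comp_limit_eq [CompleteSpace E] (h : IsWeakPowerLimit T P) : T ∘L P = P := by
  ext x
  refine ext_inner_right 𝕜 fun y => ?_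
  rw [ContinuousLinearMap.comp_apply, ← ContinuousLinearMap.adjoint_inner_right]
  refine tendsto_nhds_unique (h x _) ?_
  simpa only [Function.comp_def, ContinuousLinearMap.adjoint_inner_right, pow_succ',
    mul_apply_eq_comp] using (h x y).comp (tendsto_add_atTop_nat 1)

theorem apply_eq_self_of_apply_eq_self (h : IsWeakPowerLimit T P) {x : E} (hx : T x = x) :
    P x = x := by
  have hpow (n : ℕ) : (T ^ n) x = x := by
    rw [FunLike.coe_pow_eq_iterate]
    exact Function.IsFixedPt.iterate hx n
  refine ext_inner_right 𝕜 fun y => tendsto_nhds_unique (h x y) ?_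
  simpa only [hpow] using tendsto_const_nhds

theorem apply_eq_self_iff [CompleteSpace E] (h : IsWeakPowerLimit T P) {x : E} :
    P x = x ↔ T x = x := by
  refine ⟨fun hx => ?_, h.apply_eq_self_of_apply_eq_self⟩
  rw [← hx, ← ContinuousLinearMap.comp_apply, h.comp_limit_eq]

theorem isIdempotentElem [CompleteSpace E] (h : IsWeakPowerLimit T P) : IsIdempotentElem P := by
  ext x
  exact h.apply_eq_self_of_apply_eq_self (DFunLike.congr_fun h.comp_limit_eq x)

theorem adjoint [CompleteSpace E] (h : IsWeakPowerLimit T P) :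
    IsWeakPowerLimit (ContinuousLinearMap.adjoint T) (ContinuousLinearMap.adjoint P) := by
  intro x y
  have hpow (n : ℕ) :
      ContinuousLinearMap.adjoint T ^ n = ContinuousLinearMap.adjoint (T ^ n) := by
    simp only [← ContinuousLinearMap.star_eq_adjoint, star_pow]
  simp only [hpow, ContinuousLinearMap.adjoint_inner_left, ← inner_conj_symm x]
  exact (RCLike.continuous_conj.tendsto _).comp (h y x)

theorem isBoundedUnder_norm_pow_apply [CompleteSpace E] (h : IsWeakPowerLimit T P) (x : E) :
    IsBoundedUnder (· ≤ ·) atTop (fun n => ‖(T ^ n) x‖) :=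
  isBoundedUnder_norm_of_forall_tendsto_inner (h x)

theorem norm_apply_le_liminf [CompleteSpace E] (h : IsWeakPowerLimit T P) (x : E) :
    ‖P x‖ ≤ liminf (fun n => ‖(T ^ n) x‖) atTop :=
  norm_le_liminf_norm_of_tendsto_inner (h.isBoundedUnder_norm_pow_apply x) (h x (P x))

end IsWeakPowerLimit

end InnerProductSpace

/-- If `{T^n}` converges weakly to `P` and `liminf ‖T^n x‖ ≤ ‖x‖` for every `x`, then
`P` is the orthogonal projection of `H` onto `ker (I - T)`, `ker (I - T)` reduces `T`,
and `ker (I - T) = ker (I - T*)`. -/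
theorem stmt16 {H : Type*} [NormedAddCommGroup H] [InnerProductSpace ℂ H] [CompleteSpace H]
    (T P : H →L[ℂ] H)
    (hconv : ∀ x y : H,
      Tendsto (fun n : ℕ => (inner ℂ ((T ^ n) x) y : ℂ)) atTop (𝓝 (inner ℂ (P x) y)))
    (hliminf : ∀ x : H, Filter.liminf (fun n : ℕ => ‖(T ^ n) x‖) atTop ≤ ‖x‖) :
    (P ∘L P = P ∧ ContinuousLinearMap.adjoint P = P ∧
      LinearMap.range (P : H →ₗ[ℂ] H) = LinearMap.ker ((1 - T : H →L[ℂ] H) : H →ₗ[ℂ] H)) ∧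
    ((∀ x ∈ LinearMap.ker ((1 - T : H →L[ℂ] H) : H →ₗ[ℂ] H), T x ∈ LinearMap.ker ((1 - T : H →L[ℂ] H) : H →ₗ[ℂ] H)) ∧
      (∀ x ∈ LinearMap.ker ((1 - T : H →L[ℂ] H) : H →ₗ[ℂ] H),
        ContinuousLinearMap.adjoint T x ∈ LinearMap.ker ((1 - T : H →L[ℂ] H) : H →ₗ[ℂ] H))) ∧
    LinearMap.ker ((1 - T : H →L[ℂ] H) : H →ₗ[ℂ] H) = LinearMap.ker ((1 - ContinuousLinearMap.adjoint T : H →L[ℂ] H) : H →ₗ[ℂ] H) := by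
  have h : IsWeakPowerLimit T P := hconv
  have hidem : IsIdempotentElem P := h.isIdempotentElem
  have hsa : ContinuousLinearMap.adjoint P = P :=
    ContinuousLinearMap.isSelfAdjoint_of_isIdempotentElem_of_norm_apply_le hidem
      fun x => (h.norm_apply_le_liminf x).trans (hliminf x)
  have hfix (x : H) : ContinuousLinearMap.adjoint T x = x ↔ T x = x := by
    rw [← h.apply_eq_self_iff, ← h.adjoint.apply_eq_self_iff, hsa]
  simp only [ContinuousLinearMap.mem_ker_one_sub_iff_s16]
  refine ⟨⟨hidem, hsa, ?_⟩, ⟨fun x hx => by rw [hx, hx], fun x hx => ?_⟩, ?_⟩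
  · ext x
    rw [LinearMap.IsIdempotentElem.mem_range_iff
        (ContinuousLinearMap.IsIdempotentElem.toLinearMap hidem),
      ContinuousLinearMap.mem_ker_one_sub_iff_s16, ContinuousLinearMap.coe_coe, h.apply_eq_self_iff]
  · rw [(hfix x).mpr hx, hx]
  · ext x
    rw [ContinuousLinearMap.mem_ker_one_sub_iff_s16, ContinuousLinearMap.mem_ker_one_sub_iff_s16, hfix]
end
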